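/- For the modified lodgepole tree M_n, the number of root ancestral configurations is c(M_n) = 3·2^n − 2 and the number of labeled histories is h(M_n) = (2n)!! = 2·4·6···(2n). -/

import Mathlib

/-- Binary rooted trees (leaf labels abstracted away; leaves are identified
by their positions, encoded as lists of booleans). -/
inductive BTree : Type
  | leaf : BTree
  | node : BTree → BTree → BTree
  deriving DecidableEq

namespace BTree

/-- A position in a binary tree: a path from the root, `false` = left, `true` = right. -/
abbrev Pos := List Bool

/-- The subtree rooted at a position (junk value `leaf` below a leaf). -/
def subtreeAt : BTree → Pos → BTree
  | t, [] => t
  | leaf, _ :: _ => leaf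
  | node l _, false :: p => subtreeAt l p
  | node _ r, true :: p => subtreeAt r p

/-- `p` is a valid position (node) of the tree. -/
def isValidPos : BTree → Pos → Prop
  | _, [] => True
  | leaf, _ :: _ => False
  | node l _, false :: p => isValidPos l p
  | node _ r, true :: p => isValidPos r p

/-- The set of positions of the leaves of a tree. -/
def leafPositions : BTree → Finset Pos
  | leaf => {([] : Pos)}
  | node l r =>
      (leafPositions l).image (false :: ·) ∪ (leafPositions r).image (true :: ·)

/-- The number of leaves of a tree. -/
def numLeaves (t : BTree) : ℕ := (leafPositions t).card

/-- The set of positions of the internal (non-leaf) nodes of a tree. -/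
def internalPos : BTree → Finset Pos
  | leaf => ∅
  | node l r =>
      insert ([] : Pos)
        ((internalPos l).image (false :: ·) ∪ (internalPos r).image (true :: ·))

/-- A root ancestral configuration of `S`: an antichain of non-root nodes of `S`
whose descendant-leaf sets partition the leaf set, i.e. a set of valid non-root
positions such that every leaf position has exactly one weak ancestor in the set. -/
def IsConfig (S : BTree) (A : Finset Pos) : Prop :=
  (∀ p ∈ A, isValidPos S p ∧ p ≠ []) ∧
  ∀ q ∈ leafPositions S, ∃! p, p ∈ A ∧ p <+: q

/-- The partial order on configurations: `ConfigLE A B` (that is, `A ≺ B`) iff `B`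
is obtained from `A` by coalescing some (possibly no) pairs of lineages;
equivalently, every node of `A` is a weak descendant of some node of `B`. -/
def ConfigLE (A B : Finset Pos) : Prop :=
  ∀ p ∈ A, ∃ q ∈ B, q <+: p

/-- The covering relation on root ancestral configurations of `S`. -/
def Covers (S : BTree) (A B : Finset Pos) : Prop :=
  IsConfig S A ∧ IsConfig S B ∧ ConfigLE A B ∧ A ≠ B ∧
  ∀ C, IsConfig S C → ConfigLE A C → ConfigLE C B → C = A ∨ C = B

/-- The maximal root configuration: the two children of the root. -/
def rootConfig : Finset Pos := {[false], [true]}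

/-- The number of root ancestral configurations of `S`. -/
noncomputable def numConfigs (S : BTree) : ℕ := Nat.card {A : Finset Pos // IsConfig S A}

/-- A labeled history of `S`: a linear ordering of the internal nodes of `S`
in which every internal node appears after all of its internal descendants. -/
def IsLabHist (S : BTree) (L : List Pos) : Prop :=
  L.Nodup ∧ (∀ p, p ∈ L ↔ p ∈ internalPos S) ∧
  ∀ i j : Fin L.length, L.get i <+: L.get j → (j : ℕ) ≤ (i : ℕ)

/-- The number of labeled histories of `S`. -/
noncomputable def numHist (S : BTree) : ℕ := Nat.card {L : List Pos // IsLabHist S L}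

/-- The caterpillar tree on `n` leaves (`caterpillar 1` is a single leaf). -/
def caterpillar : ℕ → BTree
  | 0 => leaf
  | 1 => leaf
  | n + 2 => node (caterpillar (n + 1)) leaf

end BTree

open BTree

/-- The modified lodgepole trees: `M_0` is a cherry and `M_n` has root subtrees
`M_{n-1}` and a cherry. -/
def modLodgepole : ℕ → BTree
  | 0 => node BTree.leaf BTree.leaf
  | n + 1 => node (modLodgepole n) (node BTree.leaf BTree.leaf)

/-! A root configuration of `node l r` is a pair of cuts of `l` and `r`, and a cut is either a
root configuration or the root alone, so `c (node l r) = (c l + 1) * (c r + 1)`.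
In a labeled history of `node l cherry` the root comes last, and the root of the cherry is
incomparable with every other internal node, so it can be inserted at any of the
`|internalPos l| + 1` positions of a labeled history of `l`. Since `M_n` has `2n + 1` internal
nodes, `c (M_{n+1}) = 2 (c (M_n) + 1)` and `h (M_{n+1}) = (2n + 2) h (M_n)`. -/

namespace List

variable {α : Type*} [DecidableEq α]

theorem erase_take_append_cons_drop {L : List α} {x : α} (hx : x ∉ L) (k : ℕ) :
    (L.take k ++ x :: L.drop k).erase x = L := by
  rw [erase_append_right _ fun h => hx (mem_of_mem_take h), erase_cons_head,
    take_append_drop]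

theorem idxOf_take_append_cons_drop {L : List α} {x : α} (hx : x ∉ L) {k : ℕ}
    (hk : k ≤ L.length) : (L.take k ++ x :: L.drop k).idxOf x = k := by
  rw [idxOf_append_of_notMem fun h => hx (mem_of_mem_take h), idxOf_cons_self,
    length_take_of_le hk, Nat.add_zero]

end List

section LinearExtension

variable {α β : Type*} {R : α → α → Prop} {s : Finset α} {L : List α}

def IsLinearExt (R : α → α → Prop) (s : Finset α) (L : List α) : Prop :=
  L.Nodup ∧ (∀ a, a ∈ L ↔ a ∈ s) ∧ L.Pairwise R

theorem IsLinearExt.length_eq (h : IsLinearExt R s L) : L.length = s.card := by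
  classical
  rw [← List.toFinset_card_of_nodup h.1]
  congr
  ext a
  rw [List.mem_toFinset, h.2.1]

theorem isLinearExt_empty_iff : IsLinearExt R ∅ L ↔ L = [] := by
  refine ⟨fun h => List.eq_nil_iff_forall_not_mem.2 fun a ha => ?_, ?_⟩
  · simpa using (h.2.1 a).1 ha
  · rintro rfl
    simp [IsLinearExt]

theorem isLinearExt_insert_max_iff [DecidableEq α] {m : α} (hm : m ∉ s)
    (hmax : ∀ a ∈ s, R a m ∧ ¬ R m a) :
    IsLinearExt R (insert m s) L ↔ ∃ L₀, IsLinearExt R s L₀ ∧ L₀ ++ [m] = L := by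
  constructor
  · rintro ⟨hnd, hmem, hpw⟩
    obtain ⟨L₀, B, rfl⟩ := List.append_of_mem ((hmem m).2 (Finset.mem_insert_self m s))
    have hm₀ : m ∉ L₀ := fun h => (List.nodup_append.1 hnd).2.2 m h m (by simp) rfl
    have hmB : m ∉ B := (List.nodup_cons.1 (hnd.sublist (List.sublist_append_right _ _))).1
    obtain rfl : B = [] := List.eq_nil_iff_forall_not_mem.2 fun b hb =>
      have hbs : b ∈ s := (Finset.mem_insert.1 ((hmem b).1 (by simp [hb]))).resolve_left
        fun hbm => hmB (hbm ▸ hb)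
      (hmax b hbs).2 (List.rel_of_pairwise_cons (List.pairwise_append.1 hpw).2.1 hb)
    refine ⟨L₀, ⟨hnd.sublist (List.sublist_append_left _ _), fun a => ?_,
      hpw.sublist (List.sublist_append_left _ _)⟩, rfl⟩
    by_cases ham : a = m
    · subst ham; simp [hm₀, hm]
    · simpa [ham] using hmem a
  · rintro ⟨L₀, ⟨hnd, hmem, hpw⟩, rfl⟩
    have hm₀ : m ∉ L₀ := fun h => hm ((hmem m).1 h)
    refine ⟨hnd.append (List.nodup_singleton m) (by simpa using hm₀), fun a => ?_, ?_⟩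
    · simp [hmem, or_comm]
    · exact List.pairwise_append.2 ⟨hpw, List.pairwise_singleton _ _,
        fun a ha b hb => by rw [List.mem_singleton.1 hb]; exact (hmax a ((hmem a).1 ha)).1⟩

theorem card_isLinearExt_insert_max [DecidableEq α] {m : α} (hm : m ∉ s)
    (hmax : ∀ a ∈ s, R a m ∧ ¬ R m a) :
    Nat.card {L // IsLinearExt R (insert m s) L} = Nat.card {L // IsLinearExt R s L} := by
  have himage : {L | IsLinearExt R (insert m s) L} = (· ++ [m]) '' {L | IsLinearExt R s L} := by
    ext L
    exact isLinearExt_insert_max_iff hm hmax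
  exact (congrArg (fun t : Set (List α) => Nat.card t) himage).trans
    (Nat.card_image_of_injective (List.append_left_injective [m]) _)

theorem IsLinearExt.erase [DecidableEq α] {x : α} (h : IsLinearExt R (insert x s) L)
    (hx : x ∉ s) : IsLinearExt R s (L.erase x) := by
  refine ⟨h.1.erase x, fun a => ?_, h.2.2.sublist L.erase_sublist⟩
  rw [h.1.mem_erase_iff, h.2.1, Finset.mem_insert]
  by_cases hax : a = x
  · simp [hax, hx]
  · simp [hax]

theorem IsLinearExt.insert_take_drop [DecidableEq α] {x : α} (h : IsLinearExt R s L)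
    (hx : x ∉ s) (hinc : ∀ a ∈ s, R x a ∧ R a x) (k : ℕ) :
    IsLinearExt R (insert x s) (L.take k ++ x :: L.drop k) := by
  obtain ⟨hnd, hmem, hpw⟩ := h
  have hperm : (L.take k ++ x :: L.drop k).Perm (x :: L) := by
    simpa only [List.take_append_drop] using
      List.perm_middle (a := x) (l₁ := L.take k) (l₂ := L.drop k)
  refine ⟨hperm.nodup_iff.2 (List.nodup_cons.2 ⟨fun h => hx ((hmem x).1 h), hnd⟩),
    fun a => by simp [hperm.mem_iff, hmem], ?_⟩
  rw [← List.take_append_drop k L, List.pairwise_append] at hpw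
  obtain ⟨htake, hdrop, hcross⟩ := hpw
  have hincL : ∀ a ∈ L, R x a ∧ R a x := fun a ha => hinc a ((hmem a).1 ha)
  refine List.pairwise_append.2 ⟨htake, List.pairwise_cons.2
    ⟨fun a ha => (hincL a (List.mem_of_mem_drop ha)).1, hdrop⟩, fun a ha b hb => ?_⟩
  rcases List.mem_cons.1 hb with rfl | hb
  · exact (hincL a (List.mem_of_mem_take ha)).2
  · exact hcross a ha b hb

def linearExtInsertEquiv [DecidableEq α] {x : α} (hx : x ∉ s)
    (hinc : ∀ a ∈ s, R x a ∧ R a x) :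
    {L // IsLinearExt R (insert x s) L} ≃ {L // IsLinearExt R s L} × Fin (s.card + 1) where
  toFun L := (⟨L.1.erase x, L.2.erase hx⟩, ⟨L.1.idxOf x, by
    rw [← Finset.card_insert_of_notMem hx, ← L.2.length_eq]
    exact List.idxOf_lt_length_of_mem ((L.2.2.1 x).2 (Finset.mem_insert_self x s))⟩)
  invFun L := ⟨L.1.1.take L.2 ++ x :: L.1.1.drop L.2, L.1.2.insert_take_drop hx hinc L.2⟩
  left_inv := by
    rintro ⟨L, hL⟩
    obtain ⟨A, B, rfl⟩ := List.append_of_mem ((hL.2.1 x).2 (Finset.mem_insert_self x s))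
    have hxA : x ∉ A := fun h => (List.nodup_append.1 hL.1).2.2 x h x (by simp) rfl
    ext1
    simp [List.erase_append_right _ hxA, List.idxOf_append_of_notMem hxA]
  right_inv := by
    rintro ⟨⟨L, hL⟩, k⟩
    have hxL : x ∉ L := fun h => hx ((hL.2.1 x).1 h)
    have hk : (k : ℕ) ≤ L.length := by
      rw [hL.length_eq]; exact Nat.lt_succ_iff.1 k.isLt
    refine Prod.ext (Subtype.ext ?_) (Fin.ext ?_)
    · exact List.erase_take_append_cons_drop hxL k
    · exact List.idxOf_take_append_cons_drop hxL hk

theorem card_isLinearExt_image [DecidableEq β] {f : α → β} (hf : Function.Injective f)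
    {R' : β → β → Prop} (hR : ∀ a b, R' (f a) (f b) ↔ R a b) :
    Nat.card {L // IsLinearExt R' (s.image f) L} = Nat.card {L // IsLinearExt R s L} := by
  have himage : {L | IsLinearExt R' (s.image f) L} = List.map f '' {L | IsLinearExt R s L} := by
    ext L'
    refine ⟨fun h => ?_, ?_⟩
    · obtain ⟨L, rfl⟩ : L' ∈ Set.range (List.map f) := by
        rw [Set.range_list_map]
        intro b hb
        obtain ⟨a, -, rfl⟩ := Finset.mem_image.1 ((h.2.1 b).1 hb)
        exact Set.mem_range_self a
      exact ⟨L, ⟨h.1.of_map f, fun a => by simpa [hf.eq_iff] using h.2.1 (f a),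
        List.pairwise_map.1 h.2.2 |>.imp (hR _ _).1⟩, rfl⟩
    · rintro ⟨L, ⟨hnd, hmem, hpw⟩, rfl⟩
      refine ⟨hnd.map hf, fun b => by simp [hmem], List.pairwise_map.2 (hpw.imp (hR _ _).2)⟩
  exact (congrArg (fun t : Set (List β) => Nat.card t) himage).trans
    (Nat.card_image_of_injective (List.map_injective_iff.2 hf) _)

end LinearExtension

namespace BTree

@[simp] theorem isValidPos_nil (S : BTree) : isValidPos S [] := by
  cases S <;> trivial

theorem isValidPos_node_cons {l r : BTree} {b : Bool} {p : Pos} :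
    isValidPos (node l r) (b :: p) ↔ isValidPos (cond b r l) p := by
  cases b <;> rfl

theorem cons_mem_leafPositions_node {l r : BTree} {b : Bool} {q : Pos} :
    b :: q ∈ leafPositions (node l r) ↔ q ∈ leafPositions (cond b r l) := by
  cases b <;> simp [leafPositions]

theorem nil_notMem_leafPositions_node (l r : BTree) : [] ∉ leafPositions (node l r) := by
  simp [leafPositions]

theorem exists_mem_leafPositions_prefix :
    ∀ (S : BTree) (p : Pos), isValidPos S p → ∃ q ∈ leafPositions S, p <+: q
  | leaf, [], _ => ⟨[], by simp [leafPositions], List.prefix_rfl⟩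
  | node l _, [], _ =>
    let ⟨q, hq, _⟩ := exists_mem_leafPositions_prefix l [] (isValidPos_nil l)
    ⟨false :: q, cons_mem_leafPositions_node.2 hq, List.nil_prefix⟩
  | node l _, false :: p, hp =>
    let ⟨q, hq, hpq⟩ := exists_mem_leafPositions_prefix l p hp
    ⟨false :: q, cons_mem_leafPositions_node.2 hq, List.cons_prefix_cons.2 ⟨rfl, hpq⟩⟩
  | node _ r, true :: p, hp =>
    let ⟨q, hq, hpq⟩ := exists_mem_leafPositions_prefix r p hp
    ⟨true :: q, cons_mem_leafPositions_node.2 hq, List.cons_prefix_cons.2 ⟨rfl, hpq⟩⟩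

/-- Root configurations are the cuts avoiding the root; `{[]}` is the only other cut. -/
def IsCut (S : BTree) (A : Finset Pos) : Prop :=
  (∀ p ∈ A, isValidPos S p) ∧ ∀ q ∈ leafPositions S, ∃! p, p ∈ A ∧ p <+: q

theorem isCut_singleton_nil (S : BTree) : IsCut S {[]} :=
  ⟨by simp, fun _ _ => ⟨[], ⟨Finset.mem_singleton_self _, List.nil_prefix⟩,
    fun _ h => Finset.mem_singleton.1 h.1⟩⟩

theorem IsCut.eq_singleton_nil {S : BTree} {A : Finset Pos} (hA : IsCut S A) (h : [] ∈ A) :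
    A = {[]} := by
  refine Finset.eq_singleton_iff_unique_mem.2 ⟨h, fun p hp => ?_⟩
  obtain ⟨q, hq, hpq⟩ := exists_mem_leafPositions_prefix S p (hA.1 p hp)
  exact (hA.2 q hq).unique ⟨hp, hpq⟩ ⟨h, List.nil_prefix⟩

theorem isCut_iff {S : BTree} {A : Finset Pos} : IsCut S A ↔ A = {[]} ∨ IsConfig S A := by
  refine ⟨fun hA => ?_, ?_⟩
  · by_cases h : [] ∈ A
    · exact Or.inl (hA.eq_singleton_nil h)
    · exact Or.inr ⟨fun p hp => ⟨hA.1 p hp, fun hp' => h (hp' ▸ hp)⟩, hA.2⟩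
  · rintro (rfl | hA)
    · exact isCut_singleton_nil S
    · exact ⟨fun p hp => (hA.1 p hp).1, hA.2⟩

theorem IsConfig.nil_notMem {S : BTree} {A : Finset Pos} (hA : IsConfig S A) : [] ∉ A :=
  fun h => (hA.1 [] h).2 rfl

theorem not_isConfig_leaf (A : Finset Pos) : ¬ IsConfig leaf A := fun hA =>
  let ⟨p, ⟨hp, hpq⟩, _⟩ := hA.2 [] (by simp [leafPositions])
  (hA.1 p hp).2 (List.prefix_nil.1 hpq)

noncomputable def childPart (b : Bool) (A : Finset Pos) : Finset Pos :=
  A.preimage (List.cons b) List.cons_injective.injOn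

@[simp] theorem mem_childPart {b : Bool} {A : Finset Pos} {p : Pos} :
    p ∈ childPart b A ↔ b :: p ∈ A :=
  Finset.mem_preimage

def joinCuts (B C : Finset Pos) : Finset Pos :=
  B.image (List.cons false) ∪ C.image (List.cons true)

theorem childPart_joinCuts (b : Bool) (B C : Finset Pos) :
    childPart b (joinCuts B C) = cond b C B := by
  ext p
  cases b <;> simp [joinCuts]

theorem joinCuts_childPart {A : Finset Pos} (hA : [] ∉ A) :
    joinCuts (childPart false A) (childPart true A) = A := by
  ext p
  match p with
  | [] => simp [joinCuts, hA]
  | b :: p => cases b <;> simp [joinCuts]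

theorem existsUnique_prefix_cons_iff {A : Finset Pos} (hA : [] ∉ A) (b : Bool) (q : Pos) :
    (∃! p, p ∈ A ∧ p <+: b :: q) ↔ ∃! p, p ∈ childPart b A ∧ p <+: q := by
  have hcons : ∀ p ∈ A, p <+: b :: q → ∃ p', p = b :: p' ∧ p' <+: q := fun p hp hpq => by
    obtain ⟨b', p', rfl⟩ := List.exists_cons_of_ne_nil fun h => hA (h ▸ hp)
    obtain ⟨rfl, hp'q⟩ := List.cons_prefix_cons.1 hpq
    exact ⟨p', rfl, hp'q⟩
  constructor
  · rintro ⟨p, ⟨hp, hpq⟩, huniq⟩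
    obtain ⟨p', rfl, hpq'⟩ := hcons p hp hpq
    refine ⟨p', ⟨mem_childPart.2 hp, hpq'⟩, fun y ⟨hy, hyq⟩ => List.cons_injective (a := b) ?_⟩
    exact huniq _ ⟨mem_childPart.1 hy, List.cons_prefix_cons.2 ⟨rfl, hyq⟩⟩
  · rintro ⟨p, ⟨hp, hpq⟩, huniq⟩
    refine ⟨b :: p, ⟨mem_childPart.1 hp, List.cons_prefix_cons.2 ⟨rfl, hpq⟩⟩,
      fun y ⟨hy, hyq⟩ => ?_⟩
    obtain ⟨y', rfl, hyq'⟩ := hcons y hy hyq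
    rw [huniq y' ⟨mem_childPart.2 hy, hyq'⟩]

theorem isConfig_node_iff {l r : BTree} {A : Finset Pos} :
    IsConfig (node l r) A ↔ [] ∉ A ∧ ∀ b, IsCut (cond b r l) (childPart b A) := by
  constructor
  · intro hA
    have hnil := hA.nil_notMem
    refine ⟨hnil, fun b => ⟨fun p hp =>
      isValidPos_node_cons.1 (hA.1 _ (mem_childPart.1 hp)).1, fun q hq => ?_⟩⟩
    exact (existsUnique_prefix_cons_iff hnil b q).1 (hA.2 _ (cons_mem_leafPositions_node.2 hq))
  · rintro ⟨hnil, hcut⟩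
    refine ⟨fun p hp => ?_, fun q hq => ?_⟩
    · obtain ⟨b, p, rfl⟩ := List.exists_cons_of_ne_nil fun h => hnil (h ▸ hp)
      exact ⟨isValidPos_node_cons.2 ((hcut b).1 p (mem_childPart.2 hp)), List.cons_ne_nil b p⟩
    · obtain ⟨b, q, rfl⟩ := List.exists_cons_of_ne_nil
        fun h => nil_notMem_leafPositions_node l r (h ▸ hq)
      exact (existsUnique_prefix_cons_iff hnil b q).2
        ((hcut b).2 q (cons_mem_leafPositions_node.1 hq))

noncomputable def configNodeEquiv (l r : BTree) :
    {A // IsConfig (node l r) A} ≃ {B // IsCut l B} × {C // IsCut r C} where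
  toFun A := (⟨childPart false A.1, (isConfig_node_iff.1 A.2).2 false⟩,
    ⟨childPart true A.1, (isConfig_node_iff.1 A.2).2 true⟩)
  invFun BC := ⟨joinCuts BC.1.1 BC.2.1, isConfig_node_iff.2
    ⟨by simp [joinCuts], fun b => by
      cases b <;> rw [childPart_joinCuts]
      exacts [BC.1.2, BC.2.2]⟩⟩
  left_inv A := Subtype.ext (joinCuts_childPart (isConfig_node_iff.1 A.2).1)
  right_inv BC := Prod.ext (Subtype.ext (childPart_joinCuts false _ _))
    (Subtype.ext (childPart_joinCuts true _ _))

theorem setOf_isCut (S : BTree) : {A | IsCut S A} = insert {[]} {A | IsConfig S A} := by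
  ext A
  exact isCut_iff

theorem finite_setOf_isConfig : ∀ S : BTree, {A | IsConfig S A}.Finite
  | leaf => by simp [not_isConfig_leaf]
  | node l r => by
    have hl : Finite {B // IsCut l B} := by
      rw [← Set.coe_ofPred, setOf_isCut]; exact ((finite_setOf_isConfig l).insert _).to_subtype
    have hr : Finite {C // IsCut r C} := by
      rw [← Set.coe_ofPred, setOf_isCut]; exact ((finite_setOf_isConfig r).insert _).to_subtype
    exact Set.finite_coe_iff.1 (Finite.of_equiv _ (configNodeEquiv l r).symm)

theorem card_isCut (S : BTree) : Nat.card {A // IsCut S A} = numConfigs S + 1 := by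
  change Set.ncard {A | IsCut S A} = Set.ncard {A | IsConfig S A} + 1
  have hroot : ({[]} : Finset Pos) ∉ {A | IsConfig S A} := fun h =>
    IsConfig.nil_notMem h (Finset.mem_singleton_self _)
  rw [setOf_isCut, Set.ncard_insert_of_notMem hroot (finite_setOf_isConfig S)]

theorem numConfigs_node (l r : BTree) :
    numConfigs (node l r) = (numConfigs l + 1) * (numConfigs r + 1) := by
  rw [numConfigs, Nat.card_congr (configNodeEquiv l r), Nat.card_prod, card_isCut, card_isCut]

theorem numConfigs_leaf : numConfigs leaf = 0 := by
  simp [numConfigs, not_isConfig_leaf]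

theorem numConfigs_cherry : numConfigs (node leaf leaf) = 1 := by
  rw [numConfigs_node, numConfigs_leaf]

theorem isLabHist_iff_isLinearExt {S : BTree} {L : List Pos} :
    IsLabHist S L ↔ IsLinearExt (fun a b => ¬ a <+: b) (internalPos S) L := by
  refine and_congr_right fun _ => and_congr_right fun _ => ?_
  rw [List.pairwise_iff_get]
  refine ⟨fun h i j hij hpre => absurd (h i j hpre) (by omega), fun h i j hpre => ?_⟩
  by_contra! hji
  exact h i j hji hpre

theorem numHist_eq_card_isLinearExt (S : BTree) :
    numHist S = Nat.card {L // IsLinearExt (fun a b => ¬ a <+: b) (internalPos S) L} :=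
  Nat.card_congr (Equiv.subtypeEquivRight fun _ => isLabHist_iff_isLinearExt)

theorem internalPos_cherry : internalPos (node leaf leaf) = insert [] ∅ := by
  simp [internalPos]

theorem internalPos_node_cherry (l : BTree) :
    internalPos (node l (node leaf leaf)) =
      insert [] (insert [true] ((internalPos l).image (false :: ·))) := by
  ext p
  simp [internalPos]

theorem card_internalPos_node_cherry (l : BTree) :
    (internalPos (node l (node leaf leaf))).card = (internalPos l).card + 2 := by
  rw [internalPos_node_cherry, Finset.card_insert_of_notMem (by simp),
    Finset.card_insert_of_notMem (by simp), Finset.card_image_of_injective _ List.cons_injective]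

theorem nil_isMax {s : Finset Pos} (hs : [] ∉ s) :
    ∀ a ∈ s, ¬ a <+: [] ∧ ¬ ¬ [] <+: a := fun _ ha =>
  ⟨fun h => hs (List.prefix_nil.1 h ▸ ha), not_not_intro List.nil_prefix⟩

theorem numHist_cherry : numHist (node leaf leaf) = 1 := by
  rw [numHist_eq_card_isLinearExt, internalPos_cherry,
    card_isLinearExt_insert_max (Finset.notMem_empty _) (nil_isMax (Finset.notMem_empty _))]
  simp only [isLinearExt_empty_iff, Nat.card_unique]

theorem numHist_node_cherry (l : BTree) :
    numHist (node l (node leaf leaf)) = numHist l * ((internalPos l).card + 1) := by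
  rw [numHist_eq_card_isLinearExt, internalPos_node_cherry,
    card_isLinearExt_insert_max (by simp) (nil_isMax (by simp)),
    Nat.card_congr (linearExtInsertEquiv (by simp) (by simp [List.cons_prefix_cons])),
    Nat.card_prod, Nat.card_fin, Finset.card_image_of_injective _ List.cons_injective,
    card_isLinearExt_image (R := fun a b => ¬ a <+: b) List.cons_injective
      (by simp [List.cons_prefix_cons]),
    numHist_eq_card_isLinearExt]

end BTree

theorem card_internalPos_modLodgepole (n : ℕ) :
    (internalPos (modLodgepole n)).card = 2 * n + 1 := by
  induction n with
  | zero => simp [modLodgepole, internalPos_cherry]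
  | succ n ih => rw [modLodgepole, card_internalPos_node_cherry, ih]; ring

/-- For the modified lodgepole tree `M_n`, the number of root ancestral
configurations is `3 * 2^n - 2` and the number of labeled histories is
`(2n)!! = 2 * 4 * 6 * ⋯ * (2n)`. -/
theorem modLodgepole_counts (n : ℕ) :
    numConfigs (modLodgepole n) = 3 * 2 ^ n - 2 ∧
    numHist (modLodgepole n) = ∏ i ∈ Finset.range n, (2 * i + 2) := by
  induction n with
  | zero => exact ⟨numConfigs_cherry, numHist_cherry⟩
  | succ n ih =>
    obtain ⟨hc, hh⟩ := ih
    refine ⟨?_, ?_⟩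
    · have : 1 ≤ 2 ^ n := Nat.one_le_two_pow
      rw [modLodgepole, numConfigs_node, hc, numConfigs_cherry, pow_succ]
      omega
    · rw [modLodgepole, numHist_node_cherry, hh, card_internalPos_modLodgepole,
        Finset.prod_range_succ]
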